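/- The integer sine of an integer triangle is a positive integer: if P, Q, R ∈ Z² are not collinear, then Isin(PQR) := 2·S_{PQR} / (Il(QP)·Il(QR)) is a positive integer, where S_{PQR} is the Euclidean area of triangle PQR. -/

import Mathlib

/-!
Write `P - Q = d • w` with `d` the gcd of the coordinates of `P - Q`, so that `w` is primitive.
If `Q + t • (P - Q)` is an integer point then `t * d` is an integer (Bézout on the coordinates
of `w`), so the interior integer points of `QP` are the `Q + k • w` with `0 < k < d`, and
`Il(QP) = d`. The gcd of each column of an integer `2 × 2` matrix divides that column, so the
product of the two gcds divides both terms of the determinant; non-collinearity makes the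
quotient nonzero.
-/

/-- The set of integer points lying strictly between `P` and `Q` on the segment `PQ`. -/
def interiorIntPoints (P Q : Fin 2 → ℤ) : Set (Fin 2 → ℤ) :=
  {x | ∃ t : ℝ, 0 < t ∧ t < 1 ∧
    (fun i => (x i : ℝ)) = (1 - t) • (fun i => (P i : ℝ)) + t • (fun i => (Q i : ℝ))}

/-- The integer length of the segment `PQ`. -/
noncomputable def intLength (P Q : Fin 2 → ℤ) : ℕ := (interiorIntPoints P Q).ncard + 1

/-- Twice the Euclidean area of the triangle `PQR`: `2 S_{PQR} = |det(P−Q, R−Q)|`. -/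
def twoArea (P Q R : Fin 2 → ℤ) : ℕ :=
  (Matrix.det !![P 0 - Q 0, R 0 - Q 0; P 1 - Q 1, R 1 - Q 1]).natAbs

lemma exists_int_eq_of_mul_int_of_gcd_eq_one {w : Fin 2 → ℤ} (hw : Int.gcd (w 0) (w 1) = 1)
    {s : ℝ} (hs : ∀ i, ∃ m : ℤ, s * w i = m) : ∃ k : ℤ, s = k := by
  obtain ⟨m₀, hm₀⟩ := hs 0
  obtain ⟨m₁, hm₁⟩ := hs 1
  have hbez : ((w 0 * Int.gcdA (w 0) (w 1) + w 1 * Int.gcdB (w 0) (w 1) : ℤ) : ℝ) = 1 := by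
    rw [← Int.gcd_eq_gcd_ab, hw, Nat.cast_one, Int.cast_one]
  refine ⟨m₀ * Int.gcdA (w 0) (w 1) + m₁ * Int.gcdB (w 0) (w 1), ?_⟩
  push_cast at hbez ⊢
  linear_combination (-s) * hbez + (Int.gcdA (w 0) (w 1) : ℝ) * hm₀ +
    (Int.gcdB (w 0) (w 1) : ℝ) * hm₁

lemma interiorIntPoints_add_smul {w : Fin 2 → ℤ} (hw : Int.gcd (w 0) (w 1) = 1) (Q : Fin 2 → ℤ)
    {d : ℕ} (hd : 0 < d) :
    interiorIntPoints Q (Q + (d : ℤ) • w) = (fun k : ℤ => Q + k • w) '' Set.Ioo 0 d := by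
  have hdR : (0 : ℝ) < d := by exact_mod_cast hd
  ext x
  simp only [interiorIntPoints, Set.mem_ofPred_eq, Set.mem_image, Set.mem_Ioo, funext_iff,
    Pi.add_apply, Pi.smul_apply, smul_eq_mul, Int.cast_add, Int.cast_mul, Int.cast_natCast]
  constructor
  · rintro ⟨t, ht₀, ht₁, hx⟩
    have hxQ : ∀ i, (t * d) * w i = ((x i - Q i : ℤ) : ℝ) := fun i => by
      push_cast; linear_combination -hx i
    obtain ⟨k, hk⟩ := exists_int_eq_of_mul_int_of_gcd_eq_one hw fun i => ⟨_, hxQ i⟩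
    refine ⟨k, ⟨?_, ?_⟩, fun i => ?_⟩
    · exact_mod_cast hk ▸ mul_pos ht₀ hdR
    · exact_mod_cast hk ▸ (mul_lt_iff_lt_one_left hdR).2 ht₁
    · have hki : k * w i = x i - Q i := by exact_mod_cast hk ▸ hxQ i
      linarith
  · rintro ⟨k, ⟨hk₀, hkd⟩, hx⟩
    refine ⟨k / d, div_pos (by exact_mod_cast hk₀) hdR,
      (div_lt_one hdR).2 (by exact_mod_cast hkd), fun i => ?_⟩
    rw [← hx i]
    push_cast
    field_simp
    ring

lemma intLength_add_smul {w : Fin 2 → ℤ} (hw : Int.gcd (w 0) (w 1) = 1) (Q : Fin 2 → ℤ)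
    {d : ℕ} (hd : 0 < d) : intLength Q (Q + (d : ℤ) • w) = d := by
  have hw₀ : w ≠ 0 := by
    rintro rfl
    simp at hw
  have hinj : Function.Injective (fun k : ℤ => Q + k • w) :=
    (add_right_injective Q).comp (smul_left_injective ℤ hw₀)
  rw [intLength, interiorIntPoints_add_smul hw Q hd, Set.ncard_image_of_injective _ hinj,
    ← Finset.coe_Ioo, Set.ncard_coe_finset, Int.card_Ioo]
  omega

lemma intLength_eq_gcd {P Q : Fin 2 → ℤ} (h : P ≠ Q) :
    intLength Q P = Int.gcd (P 0 - Q 0) (P 1 - Q 1) := by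
  set d := Int.gcd (P 0 - Q 0) (P 1 - Q 1)
  have hd : 0 < d := by
    refine Int.gcd_pos_iff.2 (not_and_or.1 fun h₀ => h (funext fun i => ?_))
    fin_cases i <;> simp only [Fin.zero_eta, Fin.mk_one] <;> omega
  have hdvd : ∀ i, (d : ℤ) ∣ P i - Q i := fun i => by
    fin_cases i
    exacts [Int.gcd_dvd_left _ _, Int.gcd_dvd_right _ _]
  have hP : P = Q + (d : ℤ) • fun i => (P i - Q i) / d := by
    funext i
    simp [Int.mul_ediv_cancel' (hdvd i)]
  rw [hP, intLength_add_smul (Int.gcd_div_gcd_div_gcd hd) Q hd]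

lemma gcd_mul_gcd_dvd_det_fin_two (a b c d : ℤ) :
    ((Int.gcd a c * Int.gcd b d : ℕ) : ℤ) ∣ !![a, b; c, d].det := by
  rw [Matrix.det_fin_two_of, Nat.cast_mul, mul_comm b c]
  exact dvd_sub (mul_dvd_mul (Int.gcd_dvd_left _ _) (Int.gcd_dvd_right _ _))
    (mul_dvd_mul (Int.gcd_dvd_right _ _) (Int.gcd_dvd_left _ _))

theorem intSin_pos_integer (P Q R : Fin 2 → ℤ)
    (hncol : Matrix.det !![P 0 - Q 0, R 0 - Q 0; P 1 - Q 1, R 1 - Q 1] ≠ 0) :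
    (intLength Q P * intLength Q R) ∣ twoArea P Q R ∧
      0 < twoArea P Q R / (intLength Q P * intLength Q R) := by
  have hPQ : P ≠ Q := by
    rintro rfl
    simp at hncol
  have hRQ : R ≠ Q := by
    rintro rfl
    simp at hncol
  have hdvd : intLength Q P * intLength Q R ∣ twoArea P Q R := by
    rw [intLength_eq_gcd hPQ, intLength_eq_gcd hRQ, twoArea, ← Int.natCast_dvd_natCast,
      Int.dvd_natAbs]
    exact gcd_mul_gcd_dvd_det_fin_two _ _ _ _
  exact ⟨hdvd, Nat.div_pos (Nat.le_of_dvd (Int.natAbs_pos.2 hncol) hdvd)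
    (Nat.mul_pos (Nat.succ_pos _) (Nat.succ_pos _))⟩
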